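/- arXiv:2505.06211 — 4 statements merged into one kernel-verified Lean document; each statement's English description precedes it below -/
import Mathlib

section
/- Let W ⊆ T be a finite set of time indices with positive durations d_t > 0, and let e, p̄_t, p_t be real numbers. Then [e − ∑_{t∈W} d_t p_t]^+ ≤ ∑_{t∈W} d_t [ (e − ∑_{t'∈W} d_{t'} p̄_{t'}) / (∑_{t'∈W} d_{t'}) + p̄_t − p_t ]^+. -/
open Finset

theorem max_sum_mul_zero_le_sum_mul_max {ι α : Type*} [Semiring α] [LinearOrder α]
    [IsOrderedRing α] (s : Finset ι) (w x : ι → α) (hw : ∀ i ∈ s, 0 ≤ w i) :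
    max (∑ i ∈ s, w i * x i) 0 ≤ ∑ i ∈ s, w i * max (x i) 0 :=
  max_le (sum_le_sum fun i hi => mul_le_mul_of_nonneg_left (le_max_left _ _) (hw i hi))
    (sum_nonneg fun i hi => mul_nonneg (hw i hi) (le_max_right _ _))

theorem sum_mul_div_sum_add {ι α : Type*} [Field α] (s : Finset ι) (w a : ι → α) (c : α)
    (hw : ∑ i ∈ s, w i ≠ 0) :
    ∑ i ∈ s, w i * (c / ∑ j ∈ s, w j + a i) = c + ∑ i ∈ s, w i * a i := by
  simp only [mul_add, sum_add_distrib, ← sum_mul, mul_div_cancel₀ _ hw]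

/-- Minimum-energy limit restriction: the aggregate shortfall penalty is bounded
by the sum of per-period penalties centered at a candidate injection `pbar`. -/
theorem energy_min_restriction {ι : Type*} (W : Finset ι) (hW : W.Nonempty)
    (d pbar p : ι → ℝ) (e : ℝ) (hd : ∀ t ∈ W, 0 < d t) :
    max (e - ∑ t ∈ W, d t * p t) 0 ≤
      ∑ t ∈ W, d t *
        max ((e - ∑ t' ∈ W, d t' * pbar t') / (∑ t' ∈ W, d t') + pbar t - p t) 0 := by
  have hD : ∑ t ∈ W, d t ≠ 0 := (sum_pos hd hW).ne'
  have hshortfall : e - ∑ t ∈ W, d t * p t = ∑ t ∈ W, d t *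
      ((e - ∑ t' ∈ W, d t' * pbar t') / (∑ t' ∈ W, d t') + pbar t - p t) := by
    simp only [add_sub_assoc, sum_mul_div_sum_add W d _ _ hD, mul_sub, sum_sub_distrib]
    ring
  rw [hshortfall]
  exact max_sum_mul_zero_le_sum_mul_max W d _ fun t ht => (hd t ht).le
end

section
/- Let W ⊆ T be a finite nonempty set with positive durations d_t > 0, and let e, p̄_t, p_t be real numbers. Then [−e + ∑_{t∈W} d_t p_t]^+ ≤ ∑_{t∈W} d_t [ (−e + ∑_{t'∈W} d_{t'} p̄_{t'}) / (∑_{t'∈W} d_{t'}) + p_t − p̄_t ]^+. -/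
/-! Shifting every `p t - pbar t` by the constant `c = (-e + ∑ d pbar) / ∑ d` makes the
`d`-weighted sum of the shifted terms equal to `-e + ∑ d p`; the positive part of a
nonnegatively weighted sum is at most the weighted sum of positive parts. -/

open Finset

theorem Finset.max_sum_mul_le_sum_mul_max {ι α : Type*} [Ring α] [LinearOrder α]
    [IsOrderedRing α] (s : Finset ι) (w x : ι → α) (hw : ∀ i ∈ s, 0 ≤ w i) :
    max (∑ i ∈ s, w i * x i) 0 ≤ ∑ i ∈ s, w i * max (x i) 0 :=
  max_le (sum_le_sum fun i hi => mul_le_mul_of_nonneg_left (le_max_left _ _) (hw i hi))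
    (sum_nonneg fun i hi => mul_nonneg (hw i hi) (le_max_right _ _))

theorem Finset.sum_mul_add_div_sum_add_sub {ι K : Type*} [Field K] (s : Finset ι)
    (d q r : ι → K) (a : K) (hd : ∑ i ∈ s, d i ≠ 0) :
    ∑ i ∈ s, d i * ((a + ∑ j ∈ s, d j * r j) / ∑ j ∈ s, d j + q i - r i) =
      a + ∑ i ∈ s, d i * q i := by
  simp only [mul_sub, mul_add, sum_sub_distrib, sum_add_distrib, ← sum_mul,
    mul_div_cancel₀ _ hd]
  ring

/-- Maximum-energy limit restriction: the aggregate excess penalty is bounded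
by the sum of per-period penalties centered at a candidate injection `pbar`. -/
theorem energy_max_restriction {ι : Type*} (W : Finset ι) (hW : W.Nonempty)
    (d pbar p : ι → ℝ) (e : ℝ) (hd : ∀ t ∈ W, 0 < d t) :
    max (-e + ∑ t ∈ W, d t * p t) 0 ≤
      ∑ t ∈ W, d t *
        max ((-e + ∑ t' ∈ W, d t' * pbar t') / (∑ t' ∈ W, d t') + p t - pbar t) 0 := by
  have hD : ∑ t ∈ W, d t ≠ 0 := (sum_pos hd hW).ne'
  rw [← sum_mul_add_div_sum_add_sub W d p pbar (-e) hD]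
  exact max_sum_mul_le_sum_mul_max W d _ fun t ht => (hd t ht).le
end

section
/- Let 𝒳 = {x ∈ ℝⁿ : Ax ≤ b} be a polyhedron containing points x* and x̃, and let {x_i} ⊂ 𝒳 be a sequence with x_i → x*. Then there exist nonnegative scalars λ_i such that x̃_i := x_i + λ_i (x̃ − x*) lies in 𝒳 for every i and x̃_i → x̃. -/
/-!
Along the direction `v = x̃ − x*`, a constraint `f x ≤ c` of the polyhedron leaves at `x_i` a
slack `c − f x_i`, which allows a step `t v` as long as `t · f v ≤ c − f x_i`. Capping the
largest such step at `1` and multiplying over the finitely many constraints gives `λ_i ∈ [0, 1]`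
keeping `x_i + λ_i v` feasible. As `x_i → x*`, the slack tends to `c − f x* ≥ f x̃ − f x* = f v`,
so every capped step, hence `λ_i`, tends to `1`, and `x_i + λ_i v → x* + v = x̃`.
-/

open Filter Topology

/-- The largest `t ∈ [0, 1]` with `t * d ≤ s`, when the slack `s` is nonnegative. -/
noncomputable def cappedStep (s d : ℝ) : ℝ :=
  if 0 < d then min 1 (s / d) else 1

section CappedStep

variable {s d t : ℝ}

lemma cappedStep_nonneg (hs : 0 ≤ s) : 0 ≤ cappedStep s d := by
  unfold cappedStep
  split_ifs with hd
  · exact le_min zero_le_one (div_nonneg hs hd.le)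
  · exact zero_le_one

lemma cappedStep_le_one : cappedStep s d ≤ 1 := by
  unfold cappedStep
  split_ifs
  · exact min_le_left _ _
  · exact le_rfl

lemma mul_le_of_le_cappedStep (hs : 0 ≤ s) (ht₀ : 0 ≤ t) (ht : t ≤ cappedStep s d) :
    t * d ≤ s := by
  unfold cappedStep at ht
  split_ifs at ht with hd
  · exact (le_div_iff₀ hd).1 (ht.trans (min_le_right _ _))
  · exact (mul_nonpos_of_nonneg_of_nonpos ht₀ (not_lt.1 hd)).trans hs

lemma tendsto_cappedStep {α : Type*} {l : Filter α} {s : α → ℝ} {s₀ : ℝ}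
    (hs : Tendsto s l (𝓝 s₀)) (hd : d ≤ s₀) :
    Tendsto (fun a => cappedStep (s a) d) l (𝓝 1) := by
  unfold cappedStep
  split_ifs with hpos
  · have hlim : min 1 (s₀ / d) = 1 := min_eq_left ((one_le_div hpos).2 hd)
    simpa only [hlim] using (tendsto_const_nhds (x := (1 : ℝ))).min (hs.div_const d)
  · exact tendsto_const_nhds

end CappedStep

lemma Finset.prod_univ_le_of_nonneg_of_le_one {ι : Type*} [Fintype ι] {f : ι → ℝ}
    (hf₀ : ∀ j, 0 ≤ f j) (hf₁ : ∀ j, f j ≤ 1) (j : ι) : ∏ k, f k ≤ f j := by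
  classical
  simpa using Finset.prod_le_prod_of_subset_of_le_one (Finset.subset_univ {j})
    (fun k _ => hf₀ k) (fun k _ _ => hf₁ k)

theorem exists_shift_tendsto_of_forall_le {ι α E : Type*} [Fintype ι] [AddCommGroup E]
    [Module ℝ E] [TopologicalSpace E] [ContinuousAdd E] [ContinuousSMul ℝ E]
    (f : ι → E →L[ℝ] ℝ) (c : ι → ℝ) {l : Filter α} {x : α → E} {xstar xtil : E}
    (hxtil : ∀ j, f j xtil ≤ c j) (hx : ∀ a j, f j (x a) ≤ c j)
    (hconv : Tendsto x l (𝓝 xstar)) :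
    ∃ lam : α → ℝ, (∀ a, 0 ≤ lam a) ∧
      (∀ a j, f j (x a + lam a • (xtil - xstar)) ≤ c j) ∧
      Tendsto (fun a => x a + lam a • (xtil - xstar)) l (𝓝 xtil) := by
  set v := xtil - xstar
  set step : ι → α → ℝ := fun j a => cappedStep (c j - f j (x a)) (f j v)
  have hstep_nonneg : ∀ j a, 0 ≤ step j a := fun j a =>
    cappedStep_nonneg (sub_nonneg.2 (hx a j))
  have hstep_lim : ∀ j, Tendsto (step j) l (𝓝 1) := fun j =>
    tendsto_cappedStep (tendsto_const_nhds.sub (((f j).continuous.tendsto xstar).comp hconv))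
      (by simp only [v, map_sub]; linarith [hxtil j])
  -- A product rather than a minimum: it is below every factor and needs no nonempty `ι`.
  refine ⟨fun a => ∏ j, step j a, fun a => Finset.prod_nonneg fun j _ => hstep_nonneg j a,
    fun a j => ?_, ?_⟩
  · have hle := mul_le_of_le_cappedStep (sub_nonneg.2 (hx a j))
      (Finset.prod_nonneg fun k _ => hstep_nonneg k a)
      (Finset.prod_univ_le_of_nonneg_of_le_one (hstep_nonneg · a) (fun _ => cappedStep_le_one) j)
    simp only [map_add, map_smul, smul_eq_mul]
    linarith
  · have hlim := hconv.add ((tendsto_finsetProd Finset.univ fun j _ => hstep_lim j).smul_const v)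
    simpa [v] using hlim

theorem shifted_sequence_in_polyhedron_general (m n : ℕ)
    (A : Matrix (Fin m) (Fin n) ℝ) (b : Fin m → ℝ)
    (X : Set (Fin n → ℝ)) (hX : X = {x | ∀ j, A.mulVec x j ≤ b j})
    (xstar xtil : Fin n → ℝ) (hxtil : xtil ∈ X)
    (x : ℕ → (Fin n → ℝ)) (hx : ∀ i, x i ∈ X)
    (hconv : Tendsto x atTop (nhds xstar)) :
    ∃ lam : ℕ → ℝ, (∀ i, 0 ≤ lam i) ∧
      (∀ i, x i + lam i • (xtil - xstar) ∈ X) ∧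
      Tendsto (fun i => x i + lam i • (xtil - xstar)) atTop (nhds xtil) := by
  subst hX
  let row : Fin m → (Fin n → ℝ) →L[ℝ] ℝ := fun j =>
    LinearMap.toContinuousLinearMap ((LinearMap.proj j).comp A.mulVecLin)
  exact exists_shift_tendsto_of_forall_le row b hxtil hx hconv

/-- A convergent sequence in a polyhedron can be translated along the
direction `x̃ − x*` with suitable nonnegative multipliers so as to stay in the
polyhedron while converging to `x̃`. -/
theorem shifted_sequence_in_polyhedron (m n : ℕ)
    (A : Matrix (Fin m) (Fin n) ℝ) (b : Fin m → ℝ)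
    (X : Set (Fin n → ℝ)) (hX : X = {x | ∀ j, A.mulVec x j ≤ b j})
    (xstar xtil : Fin n → ℝ) (hxstar : xstar ∈ X) (hxtil : xtil ∈ X)
    (x : ℕ → (Fin n → ℝ)) (hx : ∀ i, x i ∈ X)
    (hconv : Tendsto x atTop (nhds xstar)) :
    ∃ lam : ℕ → ℝ, (∀ i, 0 ≤ lam i) ∧
      (∀ i, x i + lam i • (xtil - xstar) ∈ X) ∧
      Tendsto (fun i => x i + lam i • (xtil - xstar)) atTop (nhds xtil) :=
  shifted_sequence_in_polyhedron_general m n A b X hX xstar xtil hxtil x hx hconv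
end

section
/- Let F : ℝⁿ → ℝ be Lipschitz continuous with constant L on a set containing a bounded convex feasible region of diameter D, let E be a matrix with EᵀE = E, and let ρ > 0. Suppose x is a maximizer (or more generally, a KKT/stationary point as in the paper) of x ↦ F(x) − ρ‖E(x − x̄)‖₂² over a polyhedron 𝒳 containing x̄, where the feasible set has diameter at most D. If ∇F ∈ ∂F(x) satisfies the stationarity condition 0 ∈ −(∂F(x) − 2ρE(x − x̄)) + N_𝒳(x), then ‖E(x − x̄)‖₂² ≤ LD/(2ρ). -/
open scoped RealInnerProductSpace

/-! Testing the stationarity condition at the feasible point `x̄` gives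
`2ρ ⟪E u, u⟫ ≤ ⟪∇F, u⟫` for `u = x - x̄`. Since `E` is a symmetric idempotent,
`⟪E u, u⟫ = ‖E u‖²`, and Cauchy–Schwarz bounds the right side by `L D`. -/

variable {V : Type*} [NormedAddCommGroup V] [InnerProductSpace ℝ V]

theorem inner_apply_self_eq_norm_sq {E : V → V} (hE : ∀ u v, ⟪E u, E v⟫ = ⟪E u, v⟫) (u : V) :
    ⟪E u, u⟫ = ‖E u‖ ^ 2 := by
  rw [← hE u u, real_inner_self_eq_norm_sq]

theorem mul_norm_sq_le_inner_of_inner_sub_smul_nonpos {E : V → V}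
    (hE : ∀ u v, ⟪E u, E v⟫ = ⟪E u, v⟫) {g u : V} {c : ℝ}
    (h : ⟪g - c • E u, -u⟫ ≤ 0) : c * ‖E u‖ ^ 2 ≤ ⟪g, u⟫ := by
  rw [inner_neg_right, inner_sub_left, real_inner_smul_left,
    inner_apply_self_eq_norm_sq hE] at h
  linarith

theorem stationary_point_penalty_bound_general (n : ℕ)
    (E : EuclideanSpace ℝ (Fin n) →L[ℝ] EuclideanSpace ℝ (Fin n))
    (hE : ∀ u v : EuclideanSpace ℝ (Fin n), ⟪E u, E v⟫ = ⟪E u, v⟫)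
    (X : Set (EuclideanSpace ℝ (Fin n)))
    (L D ρ : ℝ) (hL : 0 ≤ L) (hρ : 0 < ρ)
    (hdiam : ∀ u ∈ X, ∀ v ∈ X, ‖u - v‖ ≤ D)
    (x xbar : EuclideanSpace ℝ (Fin n)) (hx : x ∈ X) (hxbar : xbar ∈ X)
    (gF : EuclideanSpace ℝ (Fin n)) (hgF : ‖gF‖ ≤ L)
    (hstat : ∀ y ∈ X, ⟪gF - (2 * ρ) • E (x - xbar), y - x⟫ ≤ 0) :
    ‖E (x - xbar)‖ ^ 2 ≤ L * D / (2 * ρ) := by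
  have htest : ⟪gF - (2 * ρ) • E (x - xbar), -(x - xbar)⟫ ≤ 0 := by
    simpa only [neg_sub] using hstat xbar hxbar
  rw [le_div_iff₀ (by positivity), mul_comm]
  calc (2 * ρ) * ‖E (x - xbar)‖ ^ 2
      ≤ ⟪gF, x - xbar⟫ := mul_norm_sq_le_inner_of_inner_sub_smul_nonpos hE htest
    _ ≤ ‖gF‖ * ‖x - xbar‖ := real_inner_le_norm _ _
    _ ≤ L * D := mul_le_mul hgF (hdiam x hx xbar hxbar) (norm_nonneg _) hL

/-- Penalty bound at a stationary (KKT) point: if a subgradient `gF` of `F`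
(bounded in norm by the Lipschitz constant `L` of `F` on the feasible region)
satisfies the stationarity condition
`gF − 2ρ E(x − x̄) ∈ N_𝒳(x)` for the penalized maximization problem over the
polyhedron `𝒳 = {x : ⟪a j, x⟫ ≤ b j ∀ j}` of diameter at most `D`,
then `‖E(x − x̄)‖² ≤ LD/(2ρ)`. -/
theorem stationary_point_penalty_bound (n m : ℕ)
    (E : EuclideanSpace ℝ (Fin n) →L[ℝ] EuclideanSpace ℝ (Fin n))
    (hE : ∀ u v : EuclideanSpace ℝ (Fin n), ⟪E u, E v⟫ = ⟪E u, v⟫)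
    (a : Fin m → EuclideanSpace ℝ (Fin n)) (b : Fin m → ℝ)
    (X : Set (EuclideanSpace ℝ (Fin n))) (hX : X = {z | ∀ j, ⟪a j, z⟫ ≤ b j})
    (L D ρ : ℝ) (hL : 0 ≤ L) (hD : 0 ≤ D) (hρ : 0 < ρ)
    (hdiam : ∀ u ∈ X, ∀ v ∈ X, ‖u - v‖ ≤ D)
    (x xbar : EuclideanSpace ℝ (Fin n)) (hx : x ∈ X) (hxbar : xbar ∈ X)
    (gF : EuclideanSpace ℝ (Fin n)) (hgF : ‖gF‖ ≤ L)
    (hstat : ∀ y ∈ X, ⟪gF - (2 * ρ) • E (x - xbar), y - x⟫ ≤ 0) :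
    ‖E (x - xbar)‖ ^ 2 ≤ L * D / (2 * ρ) :=
  stationary_point_penalty_bound_general n E hE X L D ρ hL hρ hdiam x xbar hx hxbar gF hgF hstat
end
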